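/- Fix θ > 0 and define the symplectic pairing σ(x,y) = (2/θ)·(x₁y₂ − x₂y₁ + x₃y₄ − x₄y₃) for x, y ∈ ℝ⁴, and for z₁,…,z_r ∈ ℝ⁴ the rosette phase Φ_r(z) = Σ_{1≤i<j≤r} (−1)^{i+j+1} σ(z_i, z_j). Let 1 ≤ p < p′ ≤ r with p + p′ odd, and suppose the alternating sum of the variables strictly between the two ends vanishes: Σ_{k=p+1}^{p′−1} (−1)^{k+1} z_k = 0. Then for every h ∈ ℝ⁴, if z′ is obtained from z by replacing z_p by z_p + h and z_{p′} by z_{p′} + h (all other entries unchanged), one has Φ_r(z′) = Φ_r(z) + (−1)^{p+p′+1}·σ( z_p − z_{p′} , h ). -/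

import Mathlib

/-!
The rosette phase is the quadratic form of the triangular pairing
`Φ(x, y) = Σ_{i<j} (-1)^{i+j+1} σ(x_i, y_j)`, so with `d = h·(e_p + e_{p'})` one has
`Φ(z + d, z + d) = Φ(z, z) + Φ(z, d) + Φ(d, z) + Φ(d, d)`. The last term vanishes because every
entry of `d` is a multiple of `h` and `σ(h, h) = 0`. In the cross terms the signs attached to `p`
and `p'` are opposite since `p + p'` is odd, so the variables outside `[p, p']` cancel, those
strictly between `p` and `p'` contribute a multiple of their alternating sum, which is zero, and
only the ends `z_p`, `z_{p'}` survive.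
-/

open Finset

/-- The symplectic pairing `x·θ⁻¹·y` on `ℝ⁴`. -/
noncomputable def symplecticPairing (θ : ℝ) (x y : EuclideanSpace ℝ (Fin 4)) : ℝ :=
  (2 / θ) * (x 0 * y 1 - x 1 * y 0 + x 2 * y 3 - x 3 * y 2)

/-- The rosette phase `Σ_{1≤i<j≤r} (−1)^{i+j+1} z_i θ⁻¹ z_j`. -/
noncomputable def rosettePhase (θ : ℝ) (r : ℕ) (z : ℕ → EuclideanSpace ℝ (Fin 4)) : ℝ :=
  ∑ i ∈ Finset.Icc 1 r, ∑ j ∈ Finset.Icc (i + 1) r,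
    (-1 : ℝ) ^ (i + j + 1) * symplecticPairing θ (z i) (z j)

section TriangularPairing

variable {R M : Type*} [CommRing R] [AddCommGroup M] [Module R M]

def triangularPairing (B : LinearMap.BilinForm R M) (c : ℕ → ℕ → R) (r : ℕ) (x y : ℕ → M) : R :=
  ∑ i ∈ Icc 1 r, ∑ j ∈ Icc (i + 1) r, c i j * B (x i) (y j)

variable {B : LinearMap.BilinForm R M} {c : ℕ → ℕ → R} {r : ℕ}

lemma triangularPairing_add_left (x x' y : ℕ → M) :
    triangularPairing B c r (x + x') y =
      triangularPairing B c r x y + triangularPairing B c r x' y := by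
  simp only [triangularPairing, Pi.add_apply, map_add, LinearMap.add_apply, mul_add,
    sum_add_distrib]

lemma triangularPairing_add_right (x y y' : ℕ → M) :
    triangularPairing B c r x (y + y') =
      triangularPairing B c r x y + triangularPairing B c r x y' := by
  simp only [triangularPairing, Pi.add_apply, map_add, mul_add, sum_add_distrib]

lemma triangularPairing_add_add (x d : ℕ → M) :
    triangularPairing B c r (x + d) (x + d) = triangularPairing B c r x x +
      triangularPairing B c r x d + triangularPairing B c r d x + triangularPairing B c r d d := by
  rw [triangularPairing_add_left, triangularPairing_add_right, triangularPairing_add_right]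
  ring

lemma triangularPairing_single_right {p : ℕ} (hpr : p ≤ r) (x : ℕ → M) (h : M) :
    triangularPairing B c r x (Pi.single p h) = ∑ i ∈ Ico 1 p, c i p * B (x i) h := by
  simp only [triangularPairing, Pi.single_apply, apply_ite (B _), map_zero, mul_ite, mul_zero,
    sum_ite_eq']
  rw [← sum_filter]
  congr 1
  ext i
  simp only [mem_filter, mem_Icc, mem_Ico]
  omega

lemma triangularPairing_single_left {p : ℕ} (hp : 1 ≤ p) (y : ℕ → M) (h : M) :
    triangularPairing B c r (Pi.single p h) y = ∑ j ∈ Ioc p r, c p j * B h (y j) := by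
  rw [triangularPairing, sum_eq_single p]
  · simp [Icc_add_one_left_eq_Ioc]
  · intro i _ hi
    simp [Pi.single_eq_of_ne hi]
  · intro hpr
    rw [mem_Icc] at hpr
    rw [Icc_eq_empty (by omega), sum_empty]

lemma triangularPairing_eq_zero_of_forall_mem_span {h : M} (hB : B h h = 0) {x y : ℕ → M}
    (hx : ∀ i, x i ∈ R ∙ h) (hy : ∀ j, y j ∈ R ∙ h) : triangularPairing B c r x y = 0 := by
  refine sum_eq_zero fun i _ => sum_eq_zero fun j _ => ?_
  obtain ⟨a, ha⟩ := Submodule.mem_span_singleton.mp (hx i)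
  obtain ⟨b, hb⟩ := Submodule.mem_span_singleton.mp (hy j)
  simp [← ha, ← hb, hB]

end TriangularPairing

lemma Function.update_update_add_eq_add_single {ι M : Type*} [DecidableEq ι] [AddCommMonoid M]
    {p p' : ι} (hne : p ≠ p') (z : ι → M) (h : M) :
    Function.update (Function.update z p (z p + h)) p' (z p' + h) =
      z + (Pi.single p h + Pi.single p' h) := by
  ext1 k
  rcases eq_or_ne k p' with rfl | hk'
  · simp [hne]
  rcases eq_or_ne k p with rfl | hk
  · simp [hne]
  · simp [hk, hk']

lemma Pi.single_add_single_mem_span {ι R M : Type*} [DecidableEq ι] [Semiring R]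
    [AddCommMonoid M] [Module R M] (p p' : ι) (h : M) (k : ι) :
    (Pi.single p h + Pi.single p' h : ι → M) k ∈ R ∙ h := by
  have single_mem (q : ι) : (Pi.single q h : ι → M) k ∈ R ∙ h := by
    rcases eq_or_ne k q with rfl | hk
    · simp [Submodule.mem_span_singleton_self h]
    · simp [hk]
  exact add_mem (single_mem p) (single_mem p')

section RosetteSign

variable {R M : Type*} [CommRing R] [AddCommGroup M] [Module R M] {B : LinearMap.BilinForm R M}

def rosetteSign (i j : ℕ) : R := (-1) ^ (i + j + 1)

lemma neg_one_pow_eq_neg_of_odd_add {p p' : ℕ} (hodd : Odd (p + p')) :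
    (-1 : R) ^ p' = -(-1) ^ p := by
  have hodd_pow : (-1 : R) ^ p * (-1) ^ p' = -1 := by rw [← pow_add, hodd.neg_one_pow]
  have heven_pow : (-1 : R) ^ p * (-1) ^ p = 1 := by rw [← pow_add, Even.neg_one_pow ⟨p, rfl⟩]
  linear_combination (-1) ^ p * hodd_pow - (-1) ^ p' * heven_pow

lemma sum_rosetteSign_mul_apply_left (q : ℕ) (t : Finset ℕ) (z : ℕ → M) (h : M) :
    ∑ i ∈ t, rosetteSign i q * B (z i) h = -(-1) ^ q * B (∑ i ∈ t, (-1 : R) ^ i • z i) h := by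
  simp only [rosetteSign, map_sum, LinearMap.sum_apply, map_smul, LinearMap.smul_apply,
    smul_eq_mul, mul_sum]
  exact sum_congr rfl fun i _ => by ring

lemma sum_rosetteSign_mul_apply_right (hB : B.IsAlt) (q : ℕ) (t : Finset ℕ) (z : ℕ → M) (h : M) :
    ∑ j ∈ t, rosetteSign q j * B h (z j) = (-1) ^ q * B (∑ j ∈ t, (-1 : R) ^ j • z j) h := by
  simp only [rosetteSign, map_sum, LinearMap.sum_apply, map_smul, LinearMap.smul_apply,
    smul_eq_mul, mul_sum, ← LinearMap.IsAlt.neg hB h (z _)]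
  exact sum_congr rfl fun j _ => by ring

lemma triangularPairing_rosetteSign_cross_terms (hB : B.IsAlt) {p p' r : ℕ} (hp : 1 ≤ p)
    (hpp' : p < p') (hp'r : p' ≤ r) (hodd : Odd (p + p')) (z : ℕ → M)
    (hsum : ∑ k ∈ Ioo p p', (-1 : R) ^ k • z k = 0) (h : M) :
    triangularPairing B rosetteSign r z (Pi.single p h + Pi.single p' h) +
      triangularPairing B rosetteSign r (Pi.single p h + Pi.single p' h) z = B (z p - z p') h := by
  have hsign := neg_one_pow_eq_neg_of_odd_add (R := R) hodd
  rw [triangularPairing_add_right, triangularPairing_single_right (by omega),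
    triangularPairing_single_right hp'r, triangularPairing_add_left,
    triangularPairing_single_left hp, triangularPairing_single_left (by omega),
    sum_rosetteSign_mul_apply_left, sum_rosetteSign_mul_apply_left,
    sum_rosetteSign_mul_apply_right hB, sum_rosetteSign_mul_apply_right hB, hsign]
  set W : Finset ℕ → M := fun t => ∑ k ∈ t, (-1 : R) ^ k • z k
  have hIco : W (Ico 1 p') - W (Ico 1 p) = (-1 : R) ^ p • z p := by
    simp only [W]
    rw [← sum_Ico_consecutive _ hp hpp'.le, ← Ioo_insert_left hpp', sum_insert (by simp), hsum,
      add_zero, add_sub_cancel_left]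
  have hIoc : W (Ioc p r) - W (Ioc p' r) = -((-1 : R) ^ p • z p') := by
    simp only [W]
    rw [← sum_Ioc_consecutive _ hpp'.le hp'r, ← Ioo_insert_right hpp', sum_insert (by simp), hsum,
      add_zero, add_sub_cancel_right, hsign, neg_smul]
  calc _ = (-1) ^ p * B ((W (Ico 1 p') - W (Ico 1 p)) + (W (Ioc p r) - W (Ioc p' r))) h := by
        simp only [map_add, map_sub, LinearMap.add_apply, LinearMap.sub_apply]
        ring
    _ = B (z p - z p') h := by
        rw [hIco, hIoc, ← sub_eq_add_neg, ← smul_sub, map_smul, LinearMap.smul_apply,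
          smul_eq_mul, ← mul_assoc, ← pow_add, Even.neg_one_pow ⟨p, rfl⟩, one_mul]

end RosetteSign

noncomputable def symplecticForm (θ : ℝ) : LinearMap.BilinForm ℝ (EuclideanSpace ℝ (Fin 4)) :=
  LinearMap.mk₂ ℝ (symplecticPairing θ)
    (fun _ _ _ => by simp only [symplecticPairing, PiLp.add_apply]; ring)
    (fun _ _ _ => by simp only [symplecticPairing, PiLp.smul_apply, smul_eq_mul]; ring)
    (fun _ _ _ => by simp only [symplecticPairing, PiLp.add_apply]; ring)
    (fun _ _ _ => by simp only [symplecticPairing, PiLp.smul_apply, smul_eq_mul]; ring)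

lemma symplecticForm_apply (θ : ℝ) (x y : EuclideanSpace ℝ (Fin 4)) :
    symplecticForm θ x y = symplecticPairing θ x y := rfl

lemma symplecticForm_isAlt (θ : ℝ) : (symplecticForm θ).IsAlt := fun x => by
  rw [symplecticForm_apply, symplecticPairing]; ring

lemma rosettePhase_eq_triangularPairing (θ : ℝ) (r : ℕ) (z : ℕ → EuclideanSpace ℝ (Fin 4)) :
    rosettePhase θ r z = triangularPairing (symplecticForm θ) rosetteSign r z z := rfl

theorem second_filk_move_general (θ : ℝ) (r p p' : ℕ)
    (hp : 1 ≤ p) (hpp' : p < p') (hp'r : p' ≤ r) (hodd : Odd (p + p'))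
    (z : ℕ → EuclideanSpace ℝ (Fin 4))
    (hsum : ∑ k ∈ Finset.Icc (p + 1) (p' - 1), ((-1 : ℝ) ^ (k + 1)) • z k = 0)
    (h : EuclideanSpace ℝ (Fin 4)) :
    rosettePhase θ r (Function.update (Function.update z p (z p + h)) p' (z p' + h))
      = rosettePhase θ r z + (-1 : ℝ) ^ (p + p' + 1) * symplecticPairing θ (z p - z p') h := by
  have hsum' : ∑ k ∈ Ioo p p', (-1 : ℝ) ^ k • z k = 0 := by
    rw [← Ico_add_one_left_eq_Ioo,
      ← Icc_sub_one_right_eq_Ico_of_not_isMin (by simpa using hpp'.ne_bot)]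
    simpa [pow_succ, sum_neg_distrib] using hsum
  rw [Function.update_update_add_eq_add_single hpp'.ne, rosettePhase_eq_triangularPairing,
    rosettePhase_eq_triangularPairing, triangularPairing_add_add,
    triangularPairing_eq_zero_of_forall_mem_span (symplecticForm_isAlt θ h)
      (Pi.single_add_single_mem_span p p' h) (Pi.single_add_single_mem_span p p' h),
    add_zero, add_assoc, triangularPairing_rosetteSign_cross_terms (symplecticForm_isAlt θ) hp
      hpp' hp'r hodd z hsum' h, hodd.add_one.neg_one_pow, one_mul, symplecticForm_apply]

/-- The second Filk move: for a well-oriented loop line of the rosette joining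
positions `p` and `p'` which arches over an alternating sum of variables equal to
zero, shifting both ends by the same `h` changes the rosette phase only through
the short variable `z_p − z_{p'}`. -/
theorem second_filk_move (θ : ℝ) (hθ : 0 < θ) (r p p' : ℕ)
    (hp : 1 ≤ p) (hpp' : p < p') (hp'r : p' ≤ r) (hodd : Odd (p + p'))
    (z : ℕ → EuclideanSpace ℝ (Fin 4))
    (hsum : ∑ k ∈ Finset.Icc (p + 1) (p' - 1), ((-1 : ℝ) ^ (k + 1)) • z k = 0)
    (h : EuclideanSpace ℝ (Fin 4)) :
    rosettePhase θ r (Function.update (Function.update z p (z p + h)) p' (z p' + h))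
      = rosettePhase θ r z + (-1 : ℝ) ^ (p + p' + 1) * symplecticPairing θ (z p - z p') h :=
  second_filk_move_general θ r p p' hp hpp' hp'r hodd z hsum h
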